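/- arXiv:2412.06264 — 3 statements merged into one kernel-verified Lean document; each statement's English description precedes it below -/
import Mathlib

section
/- (PMF invariance for the Kolmogorov equation.) Let S be a finite set, let u_t(y,x) be rates continuous in t ∈ [0,1] satisfying the rate conditions u_t(y,x) ≥ 0 for all y ≠ x and Σ_{y∈S} u_t(y,x) = 0 for all x, and let f_t : S → ℝ be the unique solution of the linear ODE d/dt f_t(y) = Σ_{x∈S} u_t(y,x) f_t(x) with initial condition f_0 = p, where p is a probability mass function on S. Then f_t is a probability mass function for every t ∈ [0,1], i.e. f_t(x) ≥ 0 for all x ∈ S and Σ_{x∈S} f_t(x) = 1. -/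
open Set

/-- PMF invariance for the Kolmogorov equation: the solution of the linear ODE with rates
satisfying the rate conditions and PMF initial condition stays a PMF on [0,1]. -/
theorem pmf_invariance_kolmogorov
    {S : Type*} [Fintype S]
    (u : ℝ → S → S → ℝ) (p : S → ℝ) (f : ℝ → S → ℝ)
    (hu_cont : ∀ y x, ContinuousOn (fun t => u t y x) (Icc (0:ℝ) 1))
    (hu_nonneg : ∀ t ∈ Icc (0:ℝ) 1, ∀ y x, y ≠ x → 0 ≤ u t y x)
    (hu_sum : ∀ t ∈ Icc (0:ℝ) 1, ∀ x, ∑ y, u t y x = 0)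
    (hp_nonneg : ∀ x, 0 ≤ p x) (hp_sum : ∑ x, p x = 1)
    (hf0 : ∀ x, f 0 x = p x)
    (hode : ∀ t ∈ Icc (0:ℝ) 1, ∀ y,
      HasDerivAt (fun s => f s y) (∑ x, u t y x * f t x) t) :
    ∀ t ∈ Icc (0:ℝ) 1, (∀ x, 0 ≤ f t x) ∧ ∑ x, f t x = 1 := by
  have hS : Nonempty S := by
    by_contra h
    rw [not_nonempty_iff] at h
    simp [Finset.univ_eq_empty] at hp_sum
  -- continuity of each coordinate of f on Icc 0 1
  have hf_cont : ∀ y, ContinuousOn (fun s => f s y) (Icc (0:ℝ) 1) := fun y t ht =>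
    ((hode t ht y).continuousAt).continuousWithinAt
  -- the sum is conserved
  have hsum : ∀ t ∈ Icc (0:ℝ) 1, ∑ x, f t x = 1 := by
    intro t ht
    have hconst : ∀ s ∈ Icc (0:ℝ) t, (fun r => ∑ x, f r x) s = (fun r => ∑ x, f r x) 0 := by
      apply constant_of_has_deriv_right_zero
      · exact (continuousOn_finset_sum _ fun x _ => hf_cont x).mono
          (Icc_subset_Icc le_rfl ht.2)
      · intro s hs
        have hs1 : s ∈ Icc (0:ℝ) 1 := ⟨hs.1, hs.2.le.trans ht.2⟩
        have hd : HasDerivAt (fun r => ∑ x, f r x) (∑ y, ∑ x, u s y x * f s x) s :=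
          HasDerivAt.fun_sum fun y _ => hode s hs1 y
        have hz : (∑ y, ∑ x, u s y x * f s x) = 0 := by
          rw [Finset.sum_comm]
          simp_rw [← Finset.sum_mul]
          simp [fun x => hu_sum s hs1 x]
        rw [hz] at hd
        exact hd.hasDerivWithinAt
    have := hconst t ⟨ht.1, le_rfl⟩
    simpa [hf0, hp_sum] using this
  -- bound on the rates
  obtain ⟨C, hC0, hC⟩ : ∃ C, 0 ≤ C ∧ ∀ t ∈ Icc (0:ℝ) 1, ∑ y, ∑ x, |u t y x| ≤ C := by
    have hcont : ContinuousOn (fun t => ∑ y, ∑ x, |u t y x|) (Icc (0:ℝ) 1) :=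
      continuousOn_finset_sum _ fun y _ => continuousOn_finset_sum _ fun x _ =>
        (hu_cont y x).abs
    obtain ⟨C, hC⟩ := isCompact_Icc.exists_bound_of_continuousOn hcont
    refine ⟨C, ?_, fun t ht => ?_⟩
    · have := hC 0 (by norm_num)
      have h0 : (0:ℝ) ≤ ∑ y, ∑ x, |u 0 y x| :=
        Finset.sum_nonneg fun y _ => Finset.sum_nonneg fun x _ => abs_nonneg _
      calc (0:ℝ) ≤ ∑ y, ∑ x, |u 0 y x| := h0
        _ ≤ ‖∑ y, ∑ x, |u 0 y x|‖ := le_abs_self _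
        _ ≤ C := this
    · exact (le_abs_self _).trans (hC t ht)
  set K : ℝ := C + 1 with hK
  -- key positivity claim
  have key : ∀ ε > (0:ℝ), ∀ t ∈ Icc (0:ℝ) 1, ∀ x, 0 < f t x + ε * Real.exp (K * t) := by
    intro ε hε
    by_contra hcon
    push_neg at hcon
    obtain ⟨t1, ht1, x1, hx1⟩ := hcon
    set g : ℝ → S → ℝ := fun t x => f t x + ε * Real.exp (K * t) with hg
    set m : ℝ → ℝ := fun t => Finset.univ.inf' Finset.univ_nonempty (fun x => g t x) with hm
    have hm_cont : ContinuousOn m (Icc (0:ℝ) 1) := by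
      apply ContinuousOn.finset_inf'_apply Finset.univ_nonempty
      intro x _
      exact (hf_cont x).add (continuousOn_const.mul
        ((Real.continuous_exp.comp (continuous_const.mul continuous_id)).continuousOn))
    have hm_le : ∀ t x, m t ≤ g t x := fun t x =>
      Finset.inf'_le _ (Finset.mem_univ x)
    have hm0 : 0 < m 0 := by
      obtain ⟨x, _, hx⟩ := Finset.exists_mem_eq_inf' Finset.univ_nonempty (fun x => g 0 x)
      have hx' : m 0 = g 0 x := hx
      rw [hx']
      have : 0 ≤ f 0 x := by rw [hf0]; exact hp_nonneg x
      simp only [hg, mul_zero, Real.exp_zero, mul_one]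
      positivity
    set Z : Set ℝ := {t ∈ Icc 0 t1 | m t ≤ 0} with hZ
    have hZ_closed : IsClosed Z := by
      have : Z = Icc 0 t1 ∩ m ⁻¹' (Iic 0) := by ext t; simp [hZ, and_comm]
      rw [this]
      exact (hm_cont.mono (Icc_subset_Icc le_rfl ht1.2)).preimage_isClosed_of_isClosed
        isClosed_Icc isClosed_Iic
    have hZ_ne : Z.Nonempty := ⟨t1, ⟨ht1.1, le_rfl⟩, (hm_le t1 x1).trans hx1⟩
    have hZ_bdd : BddBelow Z := ⟨0, fun t ht => ht.1.1⟩
    set τ : ℝ := sInf Z with hτ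
    have hτZ : τ ∈ Z := hZ_closed.csInf_mem hZ_ne hZ_bdd
    have hτIcc : τ ∈ Icc (0:ℝ) 1 := ⟨hτZ.1.1, hτZ.1.2.trans ht1.2⟩
    have hτpos : 0 < τ := by
      rcases hτZ.1.1.lt_or_eq with h | h
      · exact h
      · exact absurd (h ▸ hτZ.2) (not_le.mpr hm0)
    have hbefore : ∀ s, s ∈ Ico (0:ℝ) τ → 0 < m s := by
      intro s hs
      by_contra h
      push_neg at h
      have : s ∈ Z := ⟨⟨hs.1, hs.2.le.trans hτZ.1.2⟩, h⟩
      exact absurd (csInf_le hZ_bdd this) (not_le.mpr hs.2)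
    -- m τ = 0
    have hmτ_nonneg : 0 ≤ m τ := by
      have hne : Filter.NeBot (nhdsWithin τ (Ico 0 τ)) := by
        rw [nhdsWithin_Ico_eq_nhdsLT hτpos]
        exact nhdsLT_neBot τ
      have htend : Filter.Tendsto m (nhdsWithin τ (Ico 0 τ)) (nhds (m τ)) := by
        have := (hm_cont τ hτIcc).tendsto
        exact this.mono_left (nhdsWithin_mono τ (fun s hs => ⟨hs.1, hs.2.le.trans hτIcc.2⟩))
      exact ge_of_tendsto htend (Filter.eventually_of_mem self_mem_nhdsWithin
        fun s hs => (hbefore s hs).le)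
    have hmτ : m τ = 0 := le_antisymm hτZ.2 hmτ_nonneg
    obtain ⟨y, _, hy⟩ := Finset.exists_mem_eq_inf' (Finset.univ_nonempty (α := S)) (fun x => g τ x)
    have hgy : g τ y = 0 := by
      have hy' : m τ = g τ y := hy
      rw [← hy']; exact hmτ
    have hfy : f τ y = -(ε * Real.exp (K * τ)) := by
      have := hgy; simp only [hg] at this; linarith
    have hflow : ∀ x, -(ε * Real.exp (K * τ)) ≤ f τ x := by
      intro x
      have := hm_le τ x
      rw [hmτ] at this
      simp only [hg] at this; linarith
    set E : ℝ := ε * Real.exp (K * τ) with hE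
    have hEpos : 0 < E := by positivity
    -- derivative of g at τ in coordinate y
    have hd : HasDerivAt (fun s => g s y)
        ((∑ x, u τ y x * f τ x) + ε * (K * Real.exp (K * τ))) τ := by
      apply (hode τ hτIcc y).add
      have : HasDerivAt (fun s : ℝ => Real.exp (K * s)) (K * Real.exp (K * τ)) τ := by
        have h1 : HasDerivAt (fun s : ℝ => K * s) K τ := by
          simpa using (hasDerivAt_id τ).const_mul K
        simpa [mul_comm] using h1.exp
      exact this.const_mul ε
    have hDpos : 0 < (∑ x, u τ y x * f τ x) + ε * (K * Real.exp (K * τ)) := by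
      have hterm : ∀ x, -(E * |u τ y x|) ≤ u τ y x * f τ x := by
        intro x
        by_cases hxy : x = y
        · rw [hxy, hfy]
          have h1 : u τ y y ≤ |u τ y y| := le_abs_self _
          nlinarith [abs_nonneg (u τ y y), hEpos]
        · have hu := hu_nonneg τ hτIcc y x (fun h => hxy h.symm)
          have hf := hflow x
          have : u τ y x * (-E) ≤ u τ y x * f τ x := by nlinarith
          calc -(E * |u τ y x|) = u τ y x * (-E) := by rw [abs_of_nonneg hu]; ring
            _ ≤ _ := this
      have hsum_ge : -(E * C) ≤ ∑ x, u τ y x * f τ x := by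
        calc -(E * C) ≤ -(E * ∑ x, |u τ y x|) := by
              have h1 : ∑ x, |u τ y x| ≤ C := by
                refine le_trans ?_ (hC τ hτIcc)
                exact Finset.single_le_sum (f := fun y => ∑ x, |u τ y x|)
                  (fun y _ => Finset.sum_nonneg fun x _ => abs_nonneg _) (Finset.mem_univ y)
              nlinarith
          _ = ∑ x, -(E * |u τ y x|) := by rw [Finset.mul_sum, ← Finset.sum_neg_distrib]
          _ ≤ ∑ x, u τ y x * f τ x := Finset.sum_le_sum fun x _ => hterm x
      have : ε * (K * Real.exp (K * τ)) = E * K := by rw [hE]; ring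
      rw [this, hK]
      nlinarith
    -- contradiction via the slope from the left
    rw [hasDerivAt_iff_tendsto_slope] at hd
    have hslope : ∀ᶠ s in nhdsWithin τ {τ}ᶜ, 0 < slope (fun s => g s y) τ s :=
      hd.eventually (eventually_gt_nhds hDpos)
    have hmem : Ioo 0 τ ∈ nhdsWithin τ (Iio τ) := Ioo_mem_nhdsLT_of_mem ⟨hτpos, le_rfl⟩
    have hle : nhdsWithin τ (Iio τ) ≤ nhdsWithin τ {τ}ᶜ :=
      nhdsWithin_mono τ (fun s hs => ne_of_lt hs)
    obtain ⟨s, hs_slope, hs_mem⟩ :=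
      ((hslope.filter_mono hle).and (Filter.eventually_of_mem hmem fun s hs => hs)).exists
    have hsτ : s < τ := hs_mem.2
    have hgneg : g s y < 0 := by
      have hslope_def : slope (fun s => g s y) τ s = (g s y - g τ y) / (s - τ) := by
        rw [slope_def_field]
      rw [hslope_def, hgy, sub_zero] at hs_slope
      have hst : s - τ < 0 := by linarith
      by_contra h
      push_neg at h
      have : g s y / (s - τ) ≤ 0 := div_nonpos_of_nonneg_of_nonpos h hst.le
      linarith
    have : 0 < m s := hbefore s ⟨hs_mem.1.le, hsτ⟩
    have := hm_le s y
    linarith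
  -- conclude nonnegativity
  intro t ht
  refine ⟨fun x => ?_, hsum t ht⟩
  by_contra h
  push_neg at h
  set ε : ℝ := -f t x / Real.exp (K * t) with hε
  have hεpos : 0 < ε := by
    apply div_pos (by linarith) (Real.exp_pos _)
  have := key ε hεpos t ht x
  rw [hε] at this
  have hexp : Real.exp (K * t) ≠ 0 := (Real.exp_pos _).ne'
  field_simp at this
  norm_num at this
end

section
/- (Factorized probability paths have factorized velocities.) Let T be a finite set, d ≥ 1, and S = T^d. Let q_t(x) = Π_{i=1}^d q_t^i(x^i) be a factorized probability path on S, where each q_t^i is a PMF on T that is C^1 in t on [0,1), and suppose for each coordinate i there are rates u_t^i(y^i, x^i), continuous in t and satisfying the per-coordinate rate conditions, such that d/dt q_t^i(y^i) = Σ_{x^i∈T} u_t^i(y^i, x^i) q_t^i(x^i). Then the factorized velocity u_t(y,x) = Σ_{i=1}^d δ(y^{ī}, x^{ī}) u_t^i(y^i, x^i) satisfies the Kolmogorov equation d/dt q_t(y) = Σ_{x∈S} u_t(y,x) q_t(x) on S, where ī denotes all coordinates except i and δ(y^{ī},x^{ī}) = Π_{j≠i} δ(y^j,x^j). -/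
open Set

lemma aux_sum_update {T : Type*} [Fintype T] [DecidableEq T] (d : ℕ)
    (y : Fin d → T) (i : Fin d) (f : (Fin d → T) → ℝ) :
    ∑ x : Fin d → T, (if ∀ j, j ≠ i → y j = x j then f x else 0)
      = ∑ b : T, f (Function.update y i b) := by
  have hfix : ∀ x : Fin d → T, (∀ j, j ≠ i → y j = x j) → Function.update y i (x i) = x := by
    intro x hx
    funext j
    by_cases h : j = i
    · subst h; simp
    · rw [Function.update_of_ne h]; exact hx j h
  rw [Finset.sum_ite, Finset.sum_const_zero, add_zero]
  refine Finset.sum_bij' (fun x _ => x i) (fun b _ => Function.update y i b) ?_ ?_ ?_ ?_ ?_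
  · intro x _; exact Finset.mem_univ _
  · intro b _
    simp only [Finset.mem_filter, Finset.mem_univ, true_and]
    intro j hj; rw [Function.update_of_ne hj]
  · intro x hx
    simp only [Finset.mem_filter, Finset.mem_univ, true_and] at hx
    exact hfix x hx
  · intro b _; simp
  · intro x hx
    simp only [Finset.mem_filter, Finset.mem_univ, true_and] at hx
    exact congrArg f (hfix x hx).symm

/-- Factorized probability paths have factorized velocities: if each coordinate path
`q_t^i` is generated by rates `u_t^i`, then the product path `q_t(x) = ∏ᵢ q_t^i(xⁱ)` satisfies
the Kolmogorov equation with the factorized velocity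
`u_t(y,x) = Σᵢ δ(y^ī, x^ī) u_t^i(yⁱ, xⁱ)`. -/
theorem factorized_path_factorized_velocity
    {T : Type*} [Fintype T] [DecidableEq T] (d : ℕ)
    (q : ℝ → Fin d → T → ℝ) (u : ℝ → Fin d → T → T → ℝ)
    (hq_pmf : ∀ t ∈ Ico (0:ℝ) 1, ∀ i, (∀ a, 0 ≤ q t i a) ∧ ∑ a, q t i a = 1)
    (hu_cont : ∀ i a b, ContinuousOn (fun t => u t i a b) (Ico (0:ℝ) 1))
    (hu_rate : ∀ t ∈ Ico (0:ℝ) 1, ∀ i,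
      (∀ a b, a ≠ b → 0 ≤ u t i a b) ∧ ∀ b, ∑ a, u t i a b = 0)
    (hkolmogorov : ∀ t ∈ Ico (0:ℝ) 1, ∀ i a,
      HasDerivAt (fun s => q s i a) (∑ b, u t i a b * q t i b) t) :
    ∀ t ∈ Ico (0:ℝ) 1, ∀ y : Fin d → T,
      HasDerivAt (fun s => ∏ i, q s i (y i))
        (∑ x : Fin d → T,
          (∑ i, if ∀ j, j ≠ i → y j = x j then u t i (y i) (x i) else 0)
            * ∏ i, q t i (x i)) t := by
  intro t ht y
  have hd : HasDerivAt (fun s => ∏ i, q s i (y i))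
      (∑ i, (∏ j ∈ Finset.univ.erase i, q t j (y j)) •
        (∑ b, u t i (y i) b * q t i b)) t :=
    HasDerivAt.fun_finsetProd (fun i _ => hkolmogorov t ht i (y i))
  convert hd using 1
  have : ∀ x : Fin d → T,
      (∑ i, if ∀ j, j ≠ i → y j = x j then u t i (y i) (x i) else 0) * ∏ i, q t i (x i)
      = ∑ i, (if ∀ j, j ≠ i → y j = x j then u t i (y i) (x i) * ∏ j, q t j (x j) else 0) := by
    intro x
    rw [Finset.sum_mul]
    exact Finset.sum_congr rfl (fun i _ => by rw [ite_mul, zero_mul])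
  simp_rw [this]
  rw [Finset.sum_comm]
  refine Finset.sum_congr rfl (fun i _ => ?_)
  rw [aux_sum_update d y i (fun x => u t i (y i) (x i) * ∏ j, q t j (x j))]
  have hupd : ∀ b : T, (∏ j, q t j (Function.update y i b j))
      = q t i b * ∏ j ∈ Finset.univ.erase i, q t j (y j) := by
    intro b
    rw [← Finset.mul_prod_erase Finset.univ _ (Finset.mem_univ i), Function.update_self]
    congr 1
    exact Finset.prod_congr rfl (fun j hj =>
      by rw [Function.update_of_ne (Finset.ne_of_mem_erase hj)])
  rw [smul_eq_mul, Finset.mul_sum]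
  refine Finset.sum_congr rfl (fun b _ => ?_)
  rw [hupd, Function.update_self]
  ring
end

section
/- (Mixture-path conditional velocity.) Let T be a finite set, fix tokens x_0^i, x_1^i ∈ T, and let κ : [0,1] → [0,1] be C^1 with κ_t < 1 for t ∈ [0,1). Define the mixture conditional path on T by p_t(a) = κ_t δ(a, x_1^i) + (1−κ_t) δ(a, x_0^i), and the velocity u_t(b,a) = (κ̇_t/(1−κ_t)) (δ(b, x_1^i) − δ(b, a)) for a, b ∈ T. Then for all t ∈ [0,1): (i) u_t satisfies the rate conditions (u_t(b,a) ≥ 0 for b ≠ a whenever κ̇_t ≥ 0, and Σ_{b∈T} u_t(b,a) = 0 for all a); and (ii) the pair (u_t, p_t) satisfies the Kolmogorov equation d/dt p_t(b) = Σ_{a∈T} u_t(b,a) p_t(a). -/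
open Set

/-- Mixture-path conditional velocity: the mixture probability path
`p_t(a) = κ_t δ(a,x₁) + (1−κ_t) δ(a,x₀)` and the velocity
`u_t(b,a) = κ̇_t/(1−κ_t) (δ(b,x₁) − δ(b,a))` satisfy the rate conditions and the
Kolmogorov equation on [0,1). -/
theorem mixture_path_conditional_velocity
    {T : Type*} [Fintype T] [DecidableEq T]
    (x₀ x₁ : T) (κ κ' : ℝ → ℝ)
    (hκderiv : ∀ t, HasDerivAt κ (κ' t) t)
    (hκrange : ∀ t ∈ Icc (0:ℝ) 1, κ t ∈ Icc (0:ℝ) 1)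
    (hκlt : ∀ t ∈ Ico (0:ℝ) 1, κ t < 1)
    (p : ℝ → T → ℝ) (u : ℝ → T → T → ℝ)
    (hp : ∀ t a, p t a = κ t * (if a = x₁ then 1 else 0)
      + (1 - κ t) * (if a = x₀ then 1 else 0))
    (hu : ∀ t b a, u t b a = κ' t / (1 - κ t)
      * ((if b = x₁ then 1 else 0) - (if b = a then 1 else 0))) :
    ∀ t ∈ Ico (0:ℝ) 1,
      ((0 ≤ κ' t → ∀ b a, b ≠ a → 0 ≤ u t b a) ∧ (∀ a, ∑ b, u t b a = 0)) ∧
      (∀ b, HasDerivAt (fun s => p s b) (∑ a, u t b a * p t a) t) := by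
  intro t ht
  have hlt : κ t < 1 := hκlt t ht
  have hpos : (0:ℝ) < 1 - κ t := by linarith
  have hne : (1 - κ t) ≠ 0 := ne_of_gt hpos
  refine ⟨⟨?_, ?_⟩, ?_⟩
  · intro hκ' b a hba
    rw [hu]
    have h0 : (if b = a then (1:ℝ) else 0) = 0 := if_neg hba
    rw [h0]
    have : 0 ≤ κ' t / (1 - κ t) := div_nonneg hκ' hpos.le
    by_cases hb : b = x₁ <;> simp [hb, this]
  · intro a
    simp only [hu, ← Finset.sum_mul, ← Finset.mul_sum]
    have h1 : ∑ b : T, ((if b = x₁ then (1:ℝ) else 0) - (if b = a then 1 else 0)) = 0 := by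
      rw [Finset.sum_sub_distrib]
      simp [Finset.sum_ite_eq']
    rw [h1, mul_zero]
  · intro b
    set A : ℝ := if b = x₁ then 1 else 0 with hA
    set B : ℝ := if b = x₀ then 1 else 0 with hB
    have hderiv : HasDerivAt (fun s => p s b) (κ' t * A + (0 - κ' t) * B) t := by
      have : HasDerivAt (fun s => κ s * A + (1 - κ s) * B)
          (κ' t * A + (0 - κ' t) * B) t :=
        ((hκderiv t).mul_const A).add
          (((hasDerivAt_const t (1:ℝ)).sub (hκderiv t)).mul_const B)
      exact this.congr_of_eventuallyEq (by filter_upwards with s using (hp s b))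
    have hsum : ∑ a, u t b a * p t a = κ' t * A + (0 - κ' t) * B := by
      have key : ∀ a : T, u t b a * p t a
          = κ' t / (1 - κ t) * (A * p t a)
            - κ' t / (1 - κ t) * ((if b = a then 1 else 0) * p t a) := by
        intro a; rw [hu, hA]; ring
      rw [Finset.sum_congr rfl fun a _ => key a, Finset.sum_sub_distrib,
        ← Finset.mul_sum, ← Finset.mul_sum, ← Finset.mul_sum]
      have hS : ∑ a : T, p t a = 1 := by
        simp only [hp, Finset.sum_add_distrib, ← Finset.mul_sum]
        simp [Finset.sum_ite_eq']
      have hb : ∑ a : T, (if b = a then (1:ℝ) else 0) * p t a = p t b := by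
        simp [Finset.sum_ite_eq]
      rw [hS, hb, hp t b, ← hA, ← hB]
      field_simp
      ring
    rw [hsum]; exact hderiv
end
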